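/- Fix an integer d ≥ 3. There exist constants c₀ > 0 and C (depending only on d) such that for every z ∈ ℂ⁺, every integer ℓ ≥ 1, and every Δ ∈ ℂ with ℓ·|Δ − m_sc(z)| ≤ c₀, the matrices defining X_ℓ(Δ,z) and Y_ℓ(Δ,z) are invertible and: |X_ℓ(Δ,z) − m_d(z) − (d/(d−1))·m_d(z)²·m_sc(z)^{2ℓ}·(Δ − m_sc(z))| ≤ C·ℓ·|Δ − m_sc(z)|², and |Y_ℓ(Δ,z) − m_sc(z) − m_sc(z)^{2ℓ+2}·(Δ − m_sc(z)) − m_sc(z)^{2ℓ+3}·((1 − m_sc(z)^{2ℓ+2})/(1 − m_sc(z)²))·(Δ − m_sc(z))²| ≤ C·ℓ²·|Δ − m_sc(z)|³. -/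

import Mathlib

open scoped Classical

noncomputable section

namespace Paper

/-- The degree of a vertex `v` in `G`. -/
def deg {V : Type} (G : SimpleGraph V) (v : V) : ℕ :=
  Nat.card {u : V // G.Adj v u}

/-- `G` is a `d`-regular graph. -/
def IsRegular {V : Type} (d : ℕ) (G : SimpleGraph V) : Prop :=
  ∀ v, deg G v = d

/-- The excess of a finite graph: #edges - #vertices + #components. -/
def excess {V : Type} (G : SimpleGraph V) : ℤ :=
  (Nat.card G.edgeSet : ℤ) - (Nat.card V : ℤ) + (Nat.card G.ConnectedComponent : ℤ)

/-- The set of vertices at graph distance at most `R` from the set `S`. -/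
def ball {V : Type} (G : SimpleGraph V) (S : Set V) (R : ℝ) : Set V :=
  {v | ∃ u ∈ S, ∃ w : G.Walk u v, (w.length : ℝ) ≤ R}

/-- There is a path between `u` and `v` of length at most `R`. -/
def distLE {V : Type} (G : SimpleGraph V) (u v : V) (R : ℝ) : Prop :=
  ∃ w : G.Walk u v, (w.length : ℝ) ≤ R

/-- The normalized adjacency matrix `A/√(d-1)`, over `ℂ`. -/
def normAdj {V : Type} (d : ℕ) (G : SimpleGraph V) : Matrix V V ℂ :=
  Matrix.of fun i j => if G.Adj i j then ((Real.sqrt ((d : ℝ) - 1) : ℂ))⁻¹ else 0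

/-- The normalized adjacency matrix `A/√(d-1)`, over `ℝ`. -/
def normAdjR {V : Type} (d : ℕ) (G : SimpleGraph V) : Matrix V V ℝ :=
  Matrix.of fun i j => if G.Adj i j then (Real.sqrt ((d : ℝ) - 1))⁻¹ else 0

/-- The Green's function `(H - z)⁻¹`. -/
def green {V : Type} [Fintype V] [DecidableEq V] (d : ℕ) (G : SimpleGraph V) (z : ℂ) :
    Matrix V V ℂ :=
  (normAdj d G - z • (1 : Matrix V V ℂ))⁻¹

/-- The Stieltjes transform `m_N(z) = Tr G(z)/N`. -/
def mN {V : Type} [Fintype V] [DecidableEq V] (d : ℕ) (G : SimpleGraph V) (z : ℂ) : ℂ :=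
  (Nat.card V : ℂ)⁻¹ * Matrix.trace (green d G z)

/-- `m_sc(z)`: the root of `m² + zm + 1 = 0` with positive imaginary part. -/
def mSC (z : ℂ) : ℂ :=
  if h : ∃ m : ℂ, m ^ 2 + z * m + 1 = 0 ∧ 0 < m.im then h.choose else 0

/-- `m_d(z) = (-z - d m_sc(z)/(d-1))⁻¹`. -/
def mD (d : ℕ) (z : ℂ) : ℂ :=
  (-z - (d : ℂ) * mSC z / ((d : ℂ) - 1))⁻¹

/-- `κ(z) = min(|Re z - 2|, |Re z + 2|)`. -/
def kappa (z : ℂ) : ℝ :=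
  min |z.re - 2| |z.re + 2|

/-- The matrix `H - z - Σ_v ((d - g v - deg v)/(d-1)) Δ e_vv` defining the
extension of `(G, g)` with weight `Δ`. -/
def extMatrix {V : Type} [Fintype V] [DecidableEq V] (d : ℕ) (G : SimpleGraph V)
    (g : V → ℕ) (Δ z : ℂ) : Matrix V V ℂ :=
  normAdj d G - z • (1 : Matrix V V ℂ) -
    Matrix.diagonal fun v => (((d : ℂ) - (g v : ℂ) - (deg G v : ℂ)) / ((d : ℂ) - 1)) * Δ

/-- The Green's function of the extension of `(G, g)` with weight `Δ`. -/
def extGreen {V : Type} [Fintype V] [DecidableEq V] (d : ℕ) (G : SimpleGraph V)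
    (g : V → ℕ) (Δ z : ℂ) : Matrix V V ℂ :=
  (extMatrix d G g Δ z)⁻¹

/-- Entry `(i,j)` of the Green's function of the extension with weight `Δ` of the
ball `B_R(S, G)`, the ball carrying the deficit function inherited from the ambient
deficit function `g0`. -/
def ballGreen {V : Type} [Fintype V] [DecidableEq V] (d : ℕ) (G : SimpleGraph V)
    (g0 : V → ℕ) (S : Set V) (R : ℝ) (Δ z : ℂ) (i j : V) : ℂ :=
  if h : i ∈ ball G S R ∧ j ∈ ball G S R then
    extGreen d (G.induce (ball G S R)) (fun v => g0 v.val) Δ z ⟨i, h.1⟩ ⟨j, h.2⟩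
  else 0

/-- The quantity `Q(G,z) = (Nd)⁻¹ Σ_{i ∼ j} G^{(j)}_{ii}(z)`. -/
def Qfun {N : ℕ} (d : ℕ) (G : SimpleGraph (Fin N)) (z : ℂ) : ℂ :=
  ((N : ℂ) * (d : ℂ))⁻¹ *
    ∑ j : Fin N, ∑ i : Fin N,
      if h : G.Adj i j then
        green d (G.induce {k : Fin N | k ≠ j}) z ⟨i, h.ne⟩ ⟨i, h.ne⟩
      else 0

/-- Logarithm in base `d - 1`. -/
def logb (d : ℕ) (x : ℝ) : ℝ :=
  Real.log x / Real.log ((d : ℝ) - 1)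

/-- The radius `ℜ = (c/4) log_{d-1} N`. -/
def RR (N d : ℕ) (c : ℝ) : ℝ :=
  (c / 4) * logb d (N : ℝ)

/-- The radius `r = r₀ log_{d-1} N`. -/
def rr (N d : ℕ) (r₀ : ℝ) : ℝ :=
  r₀ * logb d (N : ℝ)

/-- The set `Ω̄(ω)` of radius-`ℜ` tree-like `d`-regular graphs. -/
def OmegaBar (N d : ℕ) (c : ℝ) (ω : ℕ) : Set (SimpleGraph (Fin N)) :=
  {G | IsRegular d G ∧
    (∀ v : Fin N, excess (G.induce (ball G {v} (RR N d c))) ≤ (ω : ℤ)) ∧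
    (Nat.card {v : Fin N // ¬ (G.induce (ball G {v} (RR N d c))).IsAcyclic} : ℝ) ≤ (N : ℝ) ^ c}

/-- The control parameter `ε₀(z)`. -/
def eps0 (N d : ℕ) (a r : ℝ) (z : ℂ) : ℝ :=
  Real.log (N : ℝ) ^ (8 * a) *
    (((d : ℝ) - 1) ^ (-r) + Real.sqrt ((mD d z).im / ((N : ℝ) * z.im)) +
      ((N : ℝ) * z.im) ^ (-(2 / 3 : ℝ)))

/-- The control parameter `ε(z)`. -/
def eps (N d : ℕ) (a r : ℝ) (z : ℂ) : ℝ :=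
  if eps0 N d a r z ≤ (kappa z + z.im) / Real.log (N : ℝ) then eps0 N d a r z
  else Real.log (N : ℝ) ^ 4 * eps0 N d a r z

/-- The set `Ω(z)` of spectrally regular graphs. -/
def OmegaSet (N d : ℕ) (c a r₀ : ℝ) (ω : ℕ) (z : ℂ) : Set (SimpleGraph (Fin N)) :=
  {G | G ∈ OmegaBar N d c ω ∧
    ‖Qfun d G z - mSC z‖ ≤
      eps N d a (rr N d r₀) z / Real.sqrt (kappa z + z.im + eps N d a (rr N d r₀) z) ∧
    ∀ i j : Fin N,
      ‖green d G z i j -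
          ballGreen d G (fun v => d - deg G v) {i, j} (rr N d r₀) (Qfun d G z) z i j‖ ≤
        eps N d a (rr N d r₀) z}

/-- The set `Ω⁻(z)`. -/
def OmegaMinus (N d : ℕ) (c a r₀ : ℝ) (ω : ℕ) (z : ℂ) : Set (SimpleGraph (Fin N)) :=
  {G | G ∈ OmegaBar N d c ω ∧
    ‖Qfun d G z - mSC z‖ ≤
      eps N d a (rr N d r₀) z / (2 * Real.sqrt (kappa z + z.im + eps N d a (rr N d r₀) z)) ∧
    ∀ i j : Fin N,
      ‖green d G z i j -
          ballGreen d G (fun v => d - deg G v) {i, j} (rr N d r₀) (Qfun d G z) z i j‖ ≤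
        eps N d a (rr N d r₀) z / 2}

/-- `(T, o)` is a depth-`k` truncated `(d-1)`-ary tree with root `o`. -/
def IsTruncAry (d k : ℕ) {V : Type} (T : SimpleGraph V) (o : V) : Prop :=
  T.IsTree ∧ (∀ v, T.dist o v ≤ k) ∧ deg T o = d - 1 ∧
    ∀ v, v ≠ o → T.dist o v < k → deg T v = d

/-- `(T, o)` is a depth-`k` truncated `d`-regular tree with root `o`. -/
def IsTruncReg (d k : ℕ) {V : Type} (T : SimpleGraph V) (o : V) : Prop :=
  T.IsTree ∧ (∀ v, T.dist o v ≤ k) ∧ ∀ v, T.dist o v < k → deg T v = d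

/-- The Kesten–McKay density. -/
def rhoD (d : ℕ) (x : ℝ) : ℝ :=
  (1 + 1 / ((d : ℝ) - 1) - x ^ 2 / (d : ℝ))⁻¹ * Real.sqrt (max (4 - x ^ 2) 0) / (2 * Real.pi)

/-- The diameter of a finite graph. -/
def gDiam {V : Type} [Fintype V] (T : SimpleGraph V) : ℕ :=
  Finset.univ.sup fun p : V × V => T.dist p.1 p.2

/-- The set of boundary edges of `s`, oriented from inside to outside. -/
def bndSet {V : Type} (G : SimpleGraph V) (s : Set V) : Set (V × V) :=
  {p | G.Adj p.1 p.2 ∧ p.1 ∈ s ∧ p.2 ∉ s}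

/-- The vertex set of the connected component of `u` in the subgraph induced on `s`. -/
def comp {V : Type} (G : SimpleGraph V) (s : Set V) (u : V) : Set V :=
  {w | ∃ (hu : u ∈ s) (hw : w ∈ s), (G.induce s).Reachable ⟨u, hu⟩ ⟨w, hw⟩}

/-- The number of neighbors of `v` inside `s`. -/
def degIn {V : Type} (G : SimpleGraph V) (s : Set V) (v : V) : ℕ :=
  Nat.card {w : V // w ∈ s ∧ G.Adj v w}

/-- The deterministic correction `δ_Q(z)`. -/
def deltaQ (N d l : ℕ) (z : ℂ) : ℂ :=
  (((d : ℂ) - 1) ^ (l + 1) - 1) * mSC z ^ (2 * l + 2) *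
    (1 + mSC z / (Real.sqrt ((d : ℝ) - 1) : ℂ)) ^ 2 *
    ((N : ℂ) * ((d : ℂ) / (Real.sqrt ((d : ℝ) - 1) : ℂ) - z))⁻¹

/-!
On a truncated tree, a vector annihilated by all rows of the extension matrix except the root
row is determined by its value at the root: solving the rows from the leaves upwards, each vertex
carries its parent's value times `-Y / √(d-1)`, where `Y` runs through the recursion
`Y ↦ (-z - Y)⁻¹` started at `Δ` (a leaf has weight one, an inner vertex has `d - 1` children).
Hence the matrix is invertible and its `(o, o)` entry is the inverse of the coefficient of the
root row: `Y_ℓ` is the `(ℓ + 1)`-st iterate and `X_ℓ = (-z - d/(d-1) Y_{ℓ-1})⁻¹`.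

Writing the iterates as `m + δ_k` with `m = m_sc(z)`, the relation `m² + z m + 1 = 0` turns the
recursion into `δ_{k+1} = m² δ_k / (1 - m δ_k)` with `|m| < 1`. Comparing reciprocals gives
`|δ_k| ≤ |δ_0| / (1 - k |δ_0|)`, so `δ_k` stays of size `|Δ - m|` while `ℓ |Δ - m|` is small, and
expanding `1 / (1 - m δ_k)` to first and second order shows that the errors of the linear and
quadratic approximations grow at most linearly, resp. quadratically, in `k`.
-/

end Paper

namespace SimpleGraph

variable {V : Type*} {T : SimpleGraph V} {o u v w : V}

lemma IsTree.eq_penultimate_of_dist_add_one (hT : T.IsTree) {p : T.Walk o v} (hp : p.IsPath)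
    (hadj : T.Adj u v) (hu : T.dist o u + 1 = T.dist o v) : u = p.penultimate := by
  obtain ⟨q, -, hq⟩ := hT.connected.exists_path_of_dist o u
  have hqv : (q.concat hadj).IsPath :=
    (q.concat hadj).isPath_of_length_eq_dist (by rw [Walk.length_concat, hq, hu])
  have := (hT.isAcyclic.subsingleton_path o v).elim ⟨p, hp⟩ ⟨_, hqv⟩
  rw [Subtype.mk.injEq] at this
  rw [this, Walk.penultimate_concat]

lemma IsTree.eq_of_dist_add_one (hT : T.IsTree) (hu : T.Adj u v) (hw : T.Adj w v)
    (hud : T.dist o u + 1 = T.dist o v) (hwd : T.dist o w + 1 = T.dist o v) : u = w := by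
  obtain ⟨p, hp, -⟩ := hT.connected.exists_path_of_dist o v
  rw [hT.eq_penultimate_of_dist_add_one hp hu hud, hT.eq_penultimate_of_dist_add_one hp hw hwd]

lemma IsTree.exists_adj_dist_add_one (hT : T.IsTree) (hv : v ≠ o) :
    ∃ u, T.Adj u v ∧ T.dist o u + 1 = T.dist o v := by
  obtain ⟨p, -, hp⟩ := hT.connected.exists_path_of_dist v o
  cases p with
  | nil => exact absurd rfl hv
  | @cons _ u _ hadj q =>
    refine ⟨u, hadj.symm, ?_⟩
    have hle : T.dist o u ≤ q.length := dist_comm (G := T) ▸ dist_le q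
    rw [Walk.length_cons, dist_comm] at hp
    rcases hT.dist_eq_dist_add_one_of_adj o hadj with h | h <;> omega

lemma IsTree.dist_eq_add_one_of_adj_of_ne (hT : T.IsTree) (hu : T.Adj u v)
    (hud : T.dist o u + 1 = T.dist o v) (hw : T.Adj v w) (hwu : w ≠ u) :
    T.dist o w = T.dist o v + 1 := by
  rcases hT.dist_eq_dist_add_one_of_adj o hw with h | h
  · exact absurd (hT.eq_of_dist_add_one hw.symm hu h.symm hud) hwu
  · exact h

end SimpleGraph

namespace Matrix

variable {n K : Type*} [Fintype n] [DecidableEq n] [Field K]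

lemma isUnit_and_inv_apply_self_of_mulVec {M : Matrix n n K} {o : n} {B : K} (hB : B ≠ 0)
    (hroot : ∀ x, (∀ w, w ≠ o → (M *ᵥ x) w = 0) → (M *ᵥ x) o = B * x o)
    (hzero : ∀ x, (∀ w, w ≠ o → (M *ᵥ x) w = 0) → x o = 0 → x = 0) :
    IsUnit M ∧ M⁻¹ o o = B⁻¹ := by
  have hunit : IsUnit M := by
    refine mulVec_injective_iff_isUnit.mp fun x y hxy => sub_eq_zero.mp ?_
    have hker : M *ᵥ (x - y) = 0 := by rw [mulVec_sub, hxy, sub_self]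
    have hharm : ∀ w, w ≠ o → (M *ᵥ (x - y)) w = 0 := fun w _ => by rw [hker, Pi.zero_apply]
    have h := hroot _ hharm
    rw [hker, Pi.zero_apply, eq_comm, mul_eq_zero] at h
    exact hzero _ hharm (h.resolve_left hB)
  refine ⟨hunit, ?_⟩
  set x := M⁻¹ *ᵥ Pi.single o 1
  have hMx : M *ᵥ x = Pi.single o 1 := by
    rw [mulVec_mulVec, mul_nonsing_inv _ ((isUnit_iff_isUnit_det M).mp hunit), one_mulVec]
  have hx : B * x o = 1 := by
    rw [← hroot x fun w hw => by rw [hMx, Pi.single_eq_of_ne hw], hMx, Pi.single_eq_same]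
  have hxo : x o = M⁻¹ o o := by simp [x]
  exact hxo ▸ eq_inv_of_mul_eq_one_left (by rw [mul_comm, hx])

end Matrix

namespace Paper

/-- `aryGreen z Δ (k + 1)` is `Y_k(Δ, z)`: the shift lets `aryGreen z Δ 0 = Δ` stand for the
subtrees missing below the leaves. -/
def aryGreen (z Δ : ℂ) : ℕ → ℂ
  | 0 => Δ
  | k + 1 => (-z - aryGreen z Δ k)⁻¹

/-- `aryGreen z Δ k - m` for `m = m_sc(z)`, with the recursion rewritten through `-z - m = m⁻¹`
so that `z` drops out. -/
def deviation (m Δ : ℂ) : ℕ → ℂ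
  | 0 => Δ - m
  | k + 1 => m ^ 2 * deviation m Δ k / (1 - m * deviation m Δ k)

def secondCoeff (m : ℂ) : ℕ → ℂ
  | 0 => 0
  | k + 1 => m ^ 2 * secondCoeff m k + m ^ (4 * k + 3)

lemma secondCoeff_mul_one_sub_sq (m : ℂ) :
    ∀ k, secondCoeff m k * (1 - m ^ 2) = m ^ (2 * k + 1) * (1 - m ^ (2 * k))
  | 0 => by simp [secondCoeff]
  | k + 1 => by
    rw [secondCoeff, add_mul, mul_assoc, secondCoeff_mul_one_sub_sq m k]
    ring

section Deviation

variable {m Δ : ℂ}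

lemma norm_pow_mul_le (hm : ‖m‖ ≤ 1) (n : ℕ) (x : ℂ) : ‖m ^ n * x‖ ≤ ‖x‖ := by
  rw [norm_mul, norm_pow]
  exact mul_le_of_le_one_left (norm_nonneg x) (pow_le_one₀ (norm_nonneg m) hm)

lemma one_sub_norm_le_norm_one_sub_mul (hm : ‖m‖ ≤ 1) (x : ℂ) : 1 - ‖x‖ ≤ ‖1 - m * x‖ := by
  have h := norm_sub_norm_le 1 (m * x)
  have hmx : ‖m * x‖ ≤ ‖x‖ := by simpa using norm_pow_mul_le hm 1 x
  rw [norm_one] at h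
  linarith

lemma norm_deviation_succ_mul_le (hm : ‖m‖ ≤ 1) (k : ℕ) :
    ‖deviation m Δ (k + 1)‖ * ‖1 - m * deviation m Δ k‖ ≤ ‖deviation m Δ k‖ := by
  rcases eq_or_ne (1 - m * deviation m Δ k) 0 with h | h
  · simp [h]
  · rw [deviation, norm_div, div_mul_cancel₀ _ (norm_ne_zero_iff.mpr h)]
    exact norm_pow_mul_le hm 2 _

/-- The bound `‖δ_k‖ ≤ t / (1 - k t)`, `t = ‖Δ - m‖`, in inductive form; it comes from
`1 / ‖δ_{k+1}‖ ≥ 1 / ‖δ_k‖ - 1`. -/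
lemma norm_deviation_mul_le (hm : ‖m‖ ≤ 1) :
    ∀ k : ℕ, 4 * k * ‖Δ - m‖ ≤ 1 → ‖deviation m Δ k‖ * (1 - k * ‖Δ - m‖) ≤ ‖Δ - m‖
  | 0, _ => by simp [deviation]
  | k + 1, hk => by
    have ht := norm_nonneg (Δ - m)
    push_cast at hk ⊢
    have ih := norm_deviation_mul_le hm k (by linarith)
    have hstep := (norm_deviation_succ_mul_le (Δ := Δ) hm k).trans'
      (mul_le_mul_of_nonneg_left (one_sub_norm_le_norm_one_sub_mul hm (deviation m Δ k))
        (norm_nonneg _))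
    have hb := norm_nonneg (deviation m Δ (k + 1))
    nlinarith [mul_le_mul_of_nonneg_right hstep (by linarith : (0:ℝ) ≤ 1 - (k + 1) * ‖Δ - m‖)]

lemma norm_deviation_le (hm : ‖m‖ ≤ 1) {k : ℕ} (hk : 4 * k * ‖Δ - m‖ ≤ 1) :
    ‖deviation m Δ k‖ ≤ 2 * ‖Δ - m‖ := by
  nlinarith [norm_deviation_mul_le hm k hk, norm_nonneg (deviation m Δ k), norm_nonneg (Δ - m)]

lemma half_le_norm_one_sub_mul_deviation (hm : ‖m‖ ≤ 1) {k : ℕ}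
    (hk : 4 * (k + 1) * ‖Δ - m‖ ≤ 1) : 1 / 2 ≤ ‖1 - m * deviation m Δ k‖ := by
  have := norm_deviation_le (Δ := Δ) hm (k := k) (by nlinarith [norm_nonneg (Δ - m)])
  nlinarith [one_sub_norm_le_norm_one_sub_mul hm (deviation m Δ k), norm_nonneg (Δ - m),
    k.cast_nonneg (α := ℝ)]

lemma norm_div_le_two_mul {x y : ℂ} (hy : 1 / 2 ≤ ‖y‖) : ‖x / y‖ ≤ 2 * ‖x‖ := by
  rw [norm_div, div_le_iff₀ (by linarith)]
  nlinarith [norm_nonneg x]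

lemma norm_deviation_sub_le (hm : ‖m‖ ≤ 1) :
    ∀ k : ℕ, 4 * k * ‖Δ - m‖ ≤ 1 →
      ‖deviation m Δ k - m ^ (2 * k) * (Δ - m)‖ ≤ 8 * k * ‖Δ - m‖ ^ 2
  | 0, _ => by simp [deviation]
  | k + 1, hk => by
    have ht := norm_nonneg (Δ - m)
    push_cast at hk ⊢
    have hden := half_le_norm_one_sub_mul_deviation hm hk
    have hδ := norm_deviation_le hm (k := k) (by linarith)
    set δ := deviation m Δ k
    have key : deviation m Δ (k + 1) - m ^ (2 * (k + 1)) * (Δ - m) =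
        m ^ 2 * (δ - m ^ (2 * k) * (Δ - m)) + m ^ 3 * δ ^ 2 / (1 - m * δ) := by
      have : 1 - m * δ ≠ 0 := norm_pos_iff.mp (by linarith)
      rw [show deviation m Δ (k + 1) = m ^ 2 * δ / (1 - m * δ) from rfl]
      field_simp
      ring
    rw [key]
    calc _ ≤ ‖m ^ 2 * (δ - m ^ (2 * k) * (Δ - m))‖ + ‖m ^ 3 * δ ^ 2 / (1 - m * δ)‖ :=
        norm_add_le _ _
      _ ≤ 8 * k * ‖Δ - m‖ ^ 2 + 2 * (2 * ‖Δ - m‖) ^ 2 := by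
        gcongr
        · exact (norm_pow_mul_le hm 2 _).trans (norm_deviation_sub_le hm k (by linarith))
        · refine (norm_div_le_two_mul hden).trans ?_
          grw [norm_pow_mul_le hm, norm_pow, hδ]
      _ = 8 * (k + 1) * ‖Δ - m‖ ^ 2 := by ring

lemma norm_deviation_sub_sub_le (hm : ‖m‖ ≤ 1) :
    ∀ k : ℕ, 4 * k * ‖Δ - m‖ ≤ 1 →
      ‖deviation m Δ k - m ^ (2 * k) * (Δ - m) - secondCoeff m k * (Δ - m) ^ 2‖ ≤
        40 * k ^ 2 * ‖Δ - m‖ ^ 3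
  | 0, _ => by simp [deviation, secondCoeff]
  | k + 1, hk => by
    have ht := norm_nonneg (Δ - m)
    push_cast at hk ⊢
    have hden := half_le_norm_one_sub_mul_deviation hm hk
    have hδ := norm_deviation_le hm (k := k) (by linarith)
    have h1 := norm_deviation_sub_le hm k (by linarith)
    set δ := deviation m Δ k
    set e := m ^ (2 * k) * (Δ - m)
    have key : deviation m Δ (k + 1) - m ^ (2 * (k + 1)) * (Δ - m) -
          secondCoeff m (k + 1) * (Δ - m) ^ 2 =
        m ^ 2 * (δ - e - secondCoeff m k * (Δ - m) ^ 2) + m ^ 3 * ((δ - e) * (δ + e)) +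
          m ^ 4 * δ ^ 3 / (1 - m * δ) := by
      have : 1 - m * δ ≠ 0 := norm_pos_iff.mp (by linarith)
      rw [show deviation m Δ (k + 1) = m ^ 2 * δ / (1 - m * δ) from rfl, secondCoeff]
      field_simp
      ring
    have he : ‖e‖ ≤ ‖Δ - m‖ := norm_pow_mul_le hm _ _
    rw [key]
    calc _ ≤ ‖m ^ 2 * (δ - e - secondCoeff m k * (Δ - m) ^ 2)‖ + ‖m ^ 3 * ((δ - e) * (δ + e))‖ +
          ‖m ^ 4 * δ ^ 3 / (1 - m * δ)‖ := norm_add₃_le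
      _ ≤ 40 * k ^ 2 * ‖Δ - m‖ ^ 3 + 8 * k * ‖Δ - m‖ ^ 2 * (2 * ‖Δ - m‖ + ‖Δ - m‖) +
          2 * (2 * ‖Δ - m‖) ^ 3 := by
        gcongr
        · exact (norm_pow_mul_le hm 2 _).trans (norm_deviation_sub_sub_le hm k (by linarith))
        · grw [norm_pow_mul_le hm, norm_mul, norm_add_le, h1, hδ, he]
        · refine (norm_div_le_two_mul hden).trans ?_
          grw [norm_pow_mul_le hm, norm_pow, hδ]
      _ ≤ 40 * (k + 1) ^ 2 * ‖Δ - m‖ ^ 3 := by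
        nlinarith [pow_nonneg ht 3, k.cast_nonneg (α := ℝ)]

end Deviation

section TruncatedTree

open Matrix

variable {W : Type}

structure IsTruncTree (d ℓ : ℕ) (T : SimpleGraph W) (o : W) : Prop where
  isTree : T.IsTree
  dist_le : ∀ v, T.dist o v ≤ ℓ
  deg_eq : ∀ v, v ≠ o → T.dist o v < ℓ → deg T v = d

lemma IsTruncReg.isTruncTree {d ℓ : ℕ} {T : SimpleGraph W} {o : W} (h : IsTruncReg d ℓ T o) :
    IsTruncTree d ℓ T o :=
  ⟨h.1, h.2.1, fun v _ hv => h.2.2 v hv⟩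

lemma IsTruncAry.isTruncTree {d ℓ : ℕ} {T : SimpleGraph W} {o : W} (h : IsTruncAry d ℓ T o) :
    IsTruncTree d ℓ T o :=
  ⟨h.1, h.2.1, h.2.2.2⟩

lemma natCast_sub_one_ne_zero {d : ℕ} (hd : 2 ≤ d) : (d : ℂ) - 1 ≠ 0 := by
  rw [sub_ne_zero]
  exact_mod_cast (by omega : d ≠ 1)

lemma sq_ofReal_sqrt_sub_one {d : ℕ} (hd : 1 ≤ d) :
    ((Real.sqrt ((d : ℝ) - 1) : ℂ)) ^ 2 = (d : ℂ) - 1 := by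
  rw [← Complex.ofReal_pow, Real.sq_sqrt (by simpa using hd)]
  push_cast
  ring

lemma ofReal_sqrt_sub_one_ne_zero {d : ℕ} (hd : 2 ≤ d) : (Real.sqrt ((d : ℝ) - 1) : ℂ) ≠ 0 :=
  right_ne_zero_of_mul (by
    rw [← sq, sq_ofReal_sqrt_sub_one (by omega)]
    exact natCast_sub_one_ne_zero hd)

variable [Fintype W]

lemma deg_eq_degree (T : SimpleGraph W) (v : W) : deg T v = T.degree v := by
  rw [deg, ← SimpleGraph.card_neighborSet_eq_degree, Nat.card_eq_fintype_card]
  rfl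

variable [DecidableEq W]

lemma extMatrix_mulVec_apply (d : ℕ) (T : SimpleGraph W) (g : W → ℕ) (Δ z : ℂ) (x : W → ℂ)
    (v : W) :
    (extMatrix d T g Δ z *ᵥ x) v =
      ((Real.sqrt ((d : ℝ) - 1) : ℂ))⁻¹ * ∑ w ∈ T.neighborFinset v, x w -
        (z + ((d : ℂ) - g v - deg T v) / ((d : ℂ) - 1) * Δ) * x v := by
  simp only [Matrix.mulVec, dotProduct, extMatrix, normAdj, Matrix.sub_apply,
    Matrix.smul_apply, Matrix.one_apply, Matrix.diagonal_apply, Matrix.of_apply, smul_eq_mul,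
    mul_ite, mul_one, mul_zero, sub_mul, ite_mul, zero_mul, Finset.sum_sub_distrib,
    Finset.sum_ite_eq, Finset.mem_univ, if_true, Finset.mul_sum]
  rw [← Finset.sum_filter, SimpleGraph.neighborFinset_eq_filter]
  ring

namespace IsTruncTree

variable {d ℓ : ℕ} {T : SimpleGraph W} {o : W} {g : W → ℕ} {z Δ : ℂ} {x : W → ℂ}

lemma row_sub_parent (hT : IsTruncTree d ℓ T o) (hd : 2 ≤ d) (hg : ∀ v, v ≠ o → g v = 0)
    {u v : W} (huv : T.Adj u v) (hud : T.dist o u + 1 = T.dist o v)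
    (hchild : ∀ w ∈ (T.neighborFinset v).erase u,
      x w = -aryGreen z Δ (ℓ - T.dist o v) / (Real.sqrt ((d : ℝ) - 1) : ℂ) * x v) :
    ((Real.sqrt ((d : ℝ) - 1) : ℂ))⁻¹ * ∑ w ∈ (T.neighborFinset v).erase u, x w -
        ((d : ℂ) - g v - deg T v) / ((d : ℂ) - 1) * Δ * x v =
      -aryGreen z Δ (ℓ - T.dist o v) * x v := by
  have hvo : v ≠ o := by rintro rfl; simp at hud
  have hcard : ((T.neighborFinset v).erase u).card + 1 = deg T v := by
    rw [Finset.card_erase_add_one ((SimpleGraph.mem_neighborFinset _ _ _).mpr huv.symm),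
      SimpleGraph.card_neighborFinset_eq_degree, deg_eq_degree]
  have hd1 := natCast_sub_one_ne_zero hd
  have hs := ofReal_sqrt_sub_one_ne_zero hd
  rw [hg v hvo]
  rcases (hT.dist_le v).lt_or_eq with hlt | hleaf
  · -- an inner vertex has `d - 1` children and no weight
    rw [hT.deg_eq v hvo hlt] at hcard ⊢
    rw [Finset.sum_congr rfl hchild, Finset.sum_const, nsmul_eq_mul,
      show (((T.neighborFinset v).erase u).card : ℂ) = d - 1 by rw [← hcard]; push_cast; ring,
      ← sq_ofReal_sqrt_sub_one (by omega)]
    field_simp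
    ring
  · -- a leaf has no children and weight one
    have hempty : (T.neighborFinset v).erase u = ∅ :=
      Finset.eq_empty_of_forall_notMem fun w hw => by
        rw [Finset.mem_erase, SimpleGraph.mem_neighborFinset] at hw
        have := hT.isTree.dist_eq_add_one_of_adj_of_ne huv hud hw.2 hw.1
        have := hT.dist_le w
        omega
    rw [hempty, Finset.card_empty] at hcard
    rw [hempty, Finset.sum_empty, ← hcard, hleaf, Nat.sub_self, aryGreen]
    field_simp
    push_cast
    ring

lemma apply_eq_of_mulVec_eq_zero (hT : IsTruncTree d ℓ T o) (hd : 2 ≤ d)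
    (hg : ∀ v, v ≠ o → g v = 0) (hF : ∀ k < ℓ, -z - aryGreen z Δ k ≠ 0)
    (hx : ∀ w, w ≠ o → (extMatrix d T g Δ z *ᵥ x) w = 0) :
    ∀ n u v, T.Adj u v → T.dist o u + 1 = T.dist o v → ℓ - T.dist o v = n →
      x v = -aryGreen z Δ (n + 1) / (Real.sqrt ((d : ℝ) - 1) : ℂ) * x u := by
  intro n
  induction n using Nat.strong_induction_on with
  | _ n ih =>
  intro u v huv hud hn
  have hvo : v ≠ o := by rintro rfl; simp at hud
  have hrest := hT.row_sub_parent hd hg huv hud fun w hw => by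
    rw [Finset.mem_erase, SimpleGraph.mem_neighborFinset] at hw
    have hw' := hT.isTree.dist_eq_add_one_of_adj_of_ne huv hud hw.2 hw.1
    have := hT.dist_le w
    have := ih (n - 1) (by omega) v w hw.2 hw'.symm (by omega)
    rwa [Nat.sub_add_cancel (by omega), ← hn] at this
  have hrow := hx v hvo
  rw [extMatrix_mulVec_apply, ← Finset.add_sum_erase _ _
    ((SimpleGraph.mem_neighborFinset _ _ _).mpr huv.symm), mul_add] at hrow
  have hz := hF n (by have := hT.dist_le v; omega)
  have hs := ofReal_sqrt_sub_one_ne_zero hd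
  rw [hn] at hrest
  rw [aryGreen]
  field_simp
  linear_combination (Real.sqrt ((d : ℝ) - 1) : ℂ) * (hrow - hrest) - x u * mul_inv_cancel₀ hs

lemma mulVec_apply_root (hT : IsTruncTree d ℓ T o) (hd : 2 ≤ d) (hℓ : 1 ≤ ℓ)
    (hg : ∀ v, v ≠ o → g v = 0) (hgo : g o + deg T o = d) (hF : ∀ k < ℓ, -z - aryGreen z Δ k ≠ 0)
    (hx : ∀ w, w ≠ o → (extMatrix d T g Δ z *ᵥ x) w = 0) :
    (extMatrix d T g Δ z *ᵥ x) o =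
      (-z - (deg T o : ℂ) / ((d : ℂ) - 1) * aryGreen z Δ ℓ) * x o := by
  have hchild : ∀ w ∈ T.neighborFinset o,
      x w = -aryGreen z Δ ℓ / (Real.sqrt ((d : ℝ) - 1) : ℂ) * x o := by
    intro w hw
    have hdist : T.dist o w = 1 := SimpleGraph.dist_eq_one_iff_adj.mpr
      ((SimpleGraph.mem_neighborFinset _ _ _).mp hw)
    have := hT.apply_eq_of_mulVec_eq_zero hd hg hF hx (ℓ - 1) o w
      ((SimpleGraph.mem_neighborFinset _ _ _).mp hw) (by simp [hdist]) (by rw [hdist])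
    rwa [Nat.sub_add_cancel hℓ] at this
  have hcoef : (d : ℂ) - g o - deg T o = 0 := by
    rw [← hgo]; push_cast; ring
  rw [extMatrix_mulVec_apply, Finset.sum_congr rfl hchild, Finset.sum_const, nsmul_eq_mul,
    SimpleGraph.card_neighborFinset_eq_degree, ← deg_eq_degree, hcoef, ← sq_ofReal_sqrt_sub_one
    (by omega : 1 ≤ d)]
  have hd1 := natCast_sub_one_ne_zero hd
  have hs := ofReal_sqrt_sub_one_ne_zero hd
  field_simp
  ring

lemma eq_zero_of_mulVec_eq_zero (hT : IsTruncTree d ℓ T o) (hd : 2 ≤ d)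
    (hg : ∀ v, v ≠ o → g v = 0) (hF : ∀ k < ℓ, -z - aryGreen z Δ k ≠ 0)
    (hx : ∀ w, w ≠ o → (extMatrix d T g Δ z *ᵥ x) w = 0) (hxo : x o = 0) : x = 0 := by
  suffices ∀ n v, T.dist o v = n → x v = 0 from funext fun v => this _ v rfl
  intro n
  induction n using Nat.strong_induction_on with
  | _ n ih =>
  intro v hv
  rcases eq_or_ne v o with rfl | hvo
  · exact hxo
  obtain ⟨u, huv, hud⟩ := hT.isTree.exists_adj_dist_add_one hvo
  rw [hT.apply_eq_of_mulVec_eq_zero hd hg hF hx _ u v huv hud rfl, ih _ (by omega) u rfl,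
    mul_zero]

theorem isUnit_extMatrix_and_extGreen_root (hT : IsTruncTree d ℓ T o) (hd : 2 ≤ d)
    (hℓ : 1 ≤ ℓ) (hg : ∀ v, v ≠ o → g v = 0) (hgo : g o + deg T o = d)
    (hF : ∀ k < ℓ, -z - aryGreen z Δ k ≠ 0)
    (hB : -z - (deg T o : ℂ) / ((d : ℂ) - 1) * aryGreen z Δ ℓ ≠ 0) :
    IsUnit (extMatrix d T g Δ z) ∧
      extGreen d T g Δ z o o = (-z - (deg T o : ℂ) / ((d : ℂ) - 1) * aryGreen z Δ ℓ)⁻¹ :=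
  isUnit_and_inv_apply_self_of_mulVec hB
    (fun _ hx => hT.mulVec_apply_root hd hℓ hg hgo hF hx)
    (fun _ hx => hT.eq_zero_of_mulVec_eq_zero hd hg hF hx)

end IsTruncTree

end TruncatedTree

section Semicircle

variable {z m : ℂ}

lemma exists_root_im_pos (hz : 0 < z.im) : ∃ m : ℂ, m ^ 2 + z * m + 1 = 0 ∧ 0 < m.im := by
  obtain ⟨s, hs⟩ := IsAlgClosed.exists_pow_nat_eq (z ^ 2 - 4) two_pos
  set r := (-z + s) / 2
  have hr : r ^ 2 + z * r + 1 = 0 := by linear_combination hs / 4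
  have hr0 : r ≠ 0 := by rintro h; simp [h] at hr
  -- the roots are `r` and `r⁻¹`, whose imaginary parts have opposite signs
  have hrinv : r⁻¹ ^ 2 + z * r⁻¹ + 1 = 0 := by
    field_simp
    linear_combination hr
  have him : r.im ≠ 0 := by
    intro h0
    have hzr : z = -r - r⁻¹ := by field_simp; linear_combination hr
    have : z.im = 0 := by simp [hzr, Complex.inv_im, h0]
    linarith
  rcases him.lt_or_gt with hlt | hgt
  · refine ⟨r⁻¹, hrinv, ?_⟩
    rw [Complex.inv_im]
    exact div_pos (neg_pos.mpr hlt) (Complex.normSq_pos.mpr hr0)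
  · exact ⟨r, hr, hgt⟩

lemma mSC_spec (hz : 0 < z.im) : mSC z ^ 2 + z * mSC z + 1 = 0 ∧ 0 < (mSC z).im := by
  rw [mSC, dif_pos (exists_root_im_pos hz)]
  exact (exists_root_im_pos hz).choose_spec

lemma norm_lt_one_of_root (hz : 0 < z.im) (hm : 0 < m.im) (hroot : m ^ 2 + z * m + 1 = 0) :
    ‖m‖ < 1 := by
  have hm0 : m ≠ 0 := by rintro rfl; simp at hm
  have hzim : z.im = m.im / Complex.normSq m - m.im := by
    have hzm : z = -m - m⁻¹ := by field_simp; linear_combination hroot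
    simp [hzm, Complex.inv_im]
    ring
  rw [← sq_lt_one_iff₀ (norm_nonneg m), Complex.sq_norm]
  by_contra! h
  have : m.im / Complex.normSq m ≤ m.im := div_le_self hm.le h
  linarith

lemma mul_neg_sub_add (hroot : m ^ 2 + z * m + 1 = 0) (x : ℂ) :
    m * (-z - (m + x)) = 1 - m * x := by
  linear_combination -hroot

end Semicircle

section Stability

variable {z m Δ : ℂ}

lemma aryGreen_eq_add_deviation (hroot : m ^ 2 + z * m + 1 = 0) :
    ∀ k, (∀ j < k, 1 - m * deviation m Δ j ≠ 0) → aryGreen z Δ k = m + deviation m Δ k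
  | 0, _ => by simp [aryGreen, deviation]
  | k + 1, h => by
    have hm0 : m ≠ 0 := by rintro rfl; simp at hroot
    have hk := h k k.lt_succ_self
    have hne : -z - (m + deviation m Δ k) ≠ 0 := fun h0 =>
      hk (by rw [← mul_neg_sub_add hroot, h0, mul_zero])
    rw [aryGreen, aryGreen_eq_add_deviation hroot k fun j hj => h j (by omega),
      show deviation m Δ (k + 1) = m ^ 2 * deviation m Δ k / (1 - m * deviation m Δ k) from rfl]
    field_simp
    linear_combination hroot

lemma aryGreen_eq_add_deviation_of_le (hroot : m ^ 2 + z * m + 1 = 0) (hm : ‖m‖ ≤ 1) {k : ℕ}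
    (hk : 4 * k * ‖Δ - m‖ ≤ 1) : aryGreen z Δ k = m + deviation m Δ k := by
  refine aryGreen_eq_add_deviation hroot k fun j hj => norm_pos_iff.mp ?_
  have hj' : (j : ℝ) + 1 ≤ k := by exact_mod_cast hj
  have := half_le_norm_one_sub_mul_deviation hm (Δ := Δ) (k := j)
    (by nlinarith [norm_nonneg (Δ - m)])
  linarith

lemma neg_sub_aryGreen_ne_zero (hroot : m ^ 2 + z * m + 1 = 0) (hm : ‖m‖ ≤ 1) {k : ℕ}
    (hk : 4 * (k + 1) * ‖Δ - m‖ ≤ 1) : -z - aryGreen z Δ k ≠ 0 := by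
  have hne : 1 - m * deviation m Δ k ≠ 0 := norm_pos_iff.mp
    ((half_le_norm_one_sub_mul_deviation hm hk).trans_lt' (by norm_num))
  rw [aryGreen_eq_add_deviation_of_le hroot hm (by nlinarith [norm_nonneg (Δ - m)])]
  rw [← mul_neg_sub_add hroot] at hne
  exact right_ne_zero_of_mul hne

lemma norm_inv_sub_sub_div_sq_le {w u : ℂ} (hw : 1 / 2 ≤ ‖w‖) (hu : ‖u‖ ≤ 3 / 8) :
    ‖(w - u)⁻¹ - w⁻¹ - u / w ^ 2‖ ≤ 32 * ‖u‖ ^ 2 := by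
  have hwu : 1 / 8 ≤ ‖w - u‖ := by linarith [norm_sub_norm_le w u]
  have hw0 : w ≠ 0 := norm_pos_iff.mp (by linarith)
  have hwu0 : w - u ≠ 0 := norm_pos_iff.mp (by linarith)
  rw [show (w - u)⁻¹ - w⁻¹ - u / w ^ 2 = u ^ 2 / (w ^ 2 * (w - u)) by field_simp; ring,
    norm_div, norm_mul, norm_pow, norm_pow, div_le_iff₀ (by positivity)]
  have : 1 / 32 ≤ ‖w‖ ^ 2 * ‖w - u‖ := by nlinarith
  nlinarith [sq_nonneg ‖u‖]

lemma half_le_norm_neg_sub_mul_div {d : ℕ} (hd : 3 ≤ d) (hroot : m ^ 2 + z * m + 1 = 0)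
    (hm : ‖m‖ ≤ 1) : 1 / 2 ≤ ‖-z - d * m / (d - 1)‖ := by
  have hd' : (3 : ℝ) ≤ d := by exact_mod_cast hd
  have hm0 : m ≠ 0 := by rintro rfl; simp at hroot
  have hd1 := natCast_sub_one_ne_zero (by omega : 2 ≤ d)
  have hinv : 1 ≤ ‖m⁻¹‖ := by
    rw [norm_inv]; exact one_le_inv₀ (norm_pos_iff.mpr hm0) |>.mpr hm
  have hdiv : ‖m / ((d : ℂ) - 1)‖ ≤ 1 / 2 := by
    rw [norm_div, show (d : ℂ) - 1 = ((d - 1 : ℝ) : ℂ) by push_cast; ring, Complex.norm_real,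
      Real.norm_of_nonneg (by linarith), div_le_iff₀ (by linarith)]
    linarith
  rw [show -z - d * m / (d - 1) = m⁻¹ - m / (d - 1) - (m ^ 2 + z * m + 1) / m by
    field_simp; ring, hroot, zero_div, sub_zero]
  linarith [norm_sub_norm_le m⁻¹ (m / ((d : ℂ) - 1))]

lemma norm_natCast_div_sub_one_le {d : ℕ} (hd : 3 ≤ d) : ‖(d : ℂ) / ((d : ℂ) - 1)‖ ≤ 3 / 2 := by
  have hd' : (3 : ℝ) ≤ d := by exact_mod_cast hd
  rw [show (d : ℂ) / ((d : ℂ) - 1) = ((d / (d - 1) : ℝ) : ℂ) by push_cast; ring,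
    Complex.norm_real, Real.norm_of_nonneg (div_nonneg (by linarith) (by linarith)),
    div_le_iff₀ (by linarith)]
  linarith

lemma norm_natCast_div_mul_deviation_le {d k : ℕ} (hd : 3 ≤ d) (hm : ‖m‖ ≤ 1)
    (hk : 4 * k * ‖Δ - m‖ ≤ 1) : ‖(d : ℂ) / (d - 1) * deviation m Δ k‖ ≤ 3 * ‖Δ - m‖ := by
  grw [norm_mul, norm_natCast_div_sub_one_le hd, norm_deviation_le hm hk]
  linarith

lemma norm_inv_sub_mul_deviation_sub_le {d ℓ : ℕ} (hd : 3 ≤ d) (hℓ : 1 ≤ ℓ) (hm : ‖m‖ ≤ 1)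
    (hΔ : ℓ * ‖Δ - m‖ ≤ 1 / 8) {w : ℂ} (hw : 1 / 2 ≤ ‖w‖) :
    ‖(w - d / (d - 1) * deviation m Δ ℓ)⁻¹ - w⁻¹ -
        d / (d - 1) * w⁻¹ ^ 2 * m ^ (2 * ℓ) * (Δ - m)‖ ≤ 336 * ℓ * ‖Δ - m‖ ^ 2 := by
  have ht := norm_nonneg (Δ - m)
  have hℓ' : (1 : ℝ) ≤ ℓ := by exact_mod_cast hℓ
  have hu := norm_natCast_div_mul_deviation_le hd hm (k := ℓ) (by linarith)
  have hwinv : ‖w⁻¹‖ ≤ 2 := by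
    rw [norm_inv]; exact inv_le_of_inv_le₀ (by norm_num) (by linarith)
  have h1 : ‖(w - d / (d - 1) * deviation m Δ ℓ)⁻¹ - w⁻¹ -
      d / (d - 1) * deviation m Δ ℓ / w ^ 2‖ ≤ 32 * (3 * ‖Δ - m‖) ^ 2 :=
    (norm_inv_sub_sub_div_sq_le hw (by nlinarith)).trans (by gcongr)
  have h2 : ‖w⁻¹ ^ 2 * (d / (d - 1) * (deviation m Δ ℓ - m ^ (2 * ℓ) * (Δ - m)))‖ ≤
      2 ^ 2 * (3 / 2 * (8 * ℓ * ‖Δ - m‖ ^ 2)) := by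
    grw [norm_mul, norm_mul, norm_pow, hwinv, norm_natCast_div_sub_one_le hd,
      norm_deviation_sub_le hm ℓ (by linarith)]
  rw [show (w - d / (d - 1) * deviation m Δ ℓ)⁻¹ - w⁻¹ -
        d / (d - 1) * w⁻¹ ^ 2 * m ^ (2 * ℓ) * (Δ - m) =
      ((w - d / (d - 1) * deviation m Δ ℓ)⁻¹ - w⁻¹ - d / (d - 1) * deviation m Δ ℓ / w ^ 2) +
        w⁻¹ ^ 2 * (d / (d - 1) * (deviation m Δ ℓ - m ^ (2 * ℓ) * (Δ - m))) by ring]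
  refine (norm_add_le _ _).trans ((add_le_add h1 h2).trans ?_)
  nlinarith [sq_nonneg ‖Δ - m‖]

theorem IsTruncReg.extGreen_root_estimate {d ℓ : ℕ} (hd : 3 ≤ d) (hℓ : 1 ≤ ℓ)
    (hroot : m ^ 2 + z * m + 1 = 0) (hm : ‖m‖ < 1) (hΔ : ℓ * ‖Δ - m‖ ≤ 1 / 8)
    {W : Type} [Fintype W] [DecidableEq W] {T : SimpleGraph W} {o : W}
    (hT : IsTruncReg d ℓ T o) :
    IsUnit (extMatrix d T (fun _ => 0) Δ z) ∧
      ‖extGreen d T (fun _ => 0) Δ z o o - (-z - d * m / (d - 1))⁻¹ -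
          d / (d - 1) * (-z - d * m / (d - 1))⁻¹ ^ 2 * m ^ (2 * ℓ) * (Δ - m)‖ ≤
        336 * ℓ * ‖Δ - m‖ ^ 2 := by
  have hℓ' : (1 : ℝ) ≤ ℓ := by exact_mod_cast hℓ
  have ht8 : ‖Δ - m‖ ≤ 1 / 8 := by nlinarith [norm_nonneg (Δ - m)]
  have hdeg : deg T o = d := hT.2.2 o (by rw [SimpleGraph.dist_self]; omega)
  have hB : -z - (deg T o : ℂ) / ((d : ℂ) - 1) * aryGreen z Δ ℓ =
      (-z - d * m / (d - 1)) - d / (d - 1) * deviation m Δ ℓ := by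
    rw [hdeg, aryGreen_eq_add_deviation_of_le hroot hm.le (by nlinarith)]
    ring
  have hw := half_le_norm_neg_sub_mul_div hd hroot hm.le
  have hu := norm_natCast_div_mul_deviation_le hd hm.le (k := ℓ) (by nlinarith)
  obtain ⟨hunit, hG⟩ := hT.isTruncTree.isUnit_extMatrix_and_extGreen_root (by omega) hℓ
    (g := fun _ => 0) (fun _ _ => rfl) (by simp [hdeg])
    (fun k hk => neg_sub_aryGreen_ne_zero hroot hm.le (by
      have : (k : ℝ) + 1 ≤ ℓ := by exact_mod_cast hk
      nlinarith))
    (by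
      rw [hB]
      have := norm_sub_norm_le (-z - d * m / (d - 1)) ((d : ℂ) / (d - 1) * deviation m Δ ℓ)
      exact norm_pos_iff.mp (by linarith))
  rw [hG, hB]
  exact ⟨hunit, norm_inv_sub_mul_deviation_sub_le hd hℓ hm.le hΔ hw⟩

theorem IsTruncAry.extGreen_root_estimate {d ℓ : ℕ} (hd : 2 ≤ d) (hℓ : 1 ≤ ℓ)
    (hroot : m ^ 2 + z * m + 1 = 0) (hm : ‖m‖ < 1) (hΔ : ℓ * ‖Δ - m‖ ≤ 1 / 8)
    {W : Type} [Fintype W] [DecidableEq W] {T : SimpleGraph W} {o : W}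
    (hT : IsTruncAry d ℓ T o) :
    IsUnit (extMatrix d T (fun v => if v = o then 1 else 0) Δ z) ∧
      ‖extGreen d T (fun v => if v = o then 1 else 0) Δ z o o - m - m ^ (2 * ℓ + 2) * (Δ - m) -
          m ^ (2 * ℓ + 3) * ((1 - m ^ (2 * ℓ + 2)) / (1 - m ^ 2)) * (Δ - m) ^ 2‖ ≤
        160 * ℓ ^ 2 * ‖Δ - m‖ ^ 3 := by
  have ht := norm_nonneg (Δ - m)
  have hℓ' : (1 : ℝ) ≤ ℓ := by exact_mod_cast hℓ
  have hdeg : deg T o = d - 1 := hT.2.2.1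
  have hcoef : ((d - 1 : ℕ) : ℂ) / ((d : ℂ) - 1) = 1 := by
    rw [Nat.cast_sub (by omega), Nat.cast_one, div_self (natCast_sub_one_ne_zero hd)]
  obtain ⟨hunit, hG⟩ := hT.isTruncTree.isUnit_extMatrix_and_extGreen_root hd hℓ
    (g := fun v => if v = o then 1 else 0) (fun v hv => if_neg hv) (by simp [hdeg]; omega)
    (fun k hk => neg_sub_aryGreen_ne_zero hroot hm.le (by
      have : (k : ℝ) + 1 ≤ ℓ := by exact_mod_cast hk
      nlinarith))
    (by rw [hdeg, hcoef, one_mul]; exact neg_sub_aryGreen_ne_zero hroot hm.le (by nlinarith))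
  refine ⟨hunit, ?_⟩
  have hm2 : 1 - m ^ 2 ≠ 0 := by
    intro h
    have : ‖m‖ ^ 2 = 1 := by rw [← norm_pow, ← sub_eq_zero.mp h, norm_one]
    nlinarith [norm_nonneg m]
  have hY : extGreen d T (fun v => if v = o then 1 else 0) Δ z o o =
      m + deviation m Δ (ℓ + 1) := by
    rw [hG, hdeg, hcoef, one_mul, ← aryGreen]
    exact aryGreen_eq_add_deviation_of_le hroot hm.le (by push_cast; nlinarith)
  have hS : m ^ (2 * ℓ + 3) * ((1 - m ^ (2 * ℓ + 2)) / (1 - m ^ 2)) = secondCoeff m (ℓ + 1) := by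
    rw [eq_comm, ← mul_div_assoc, eq_div_iff hm2, secondCoeff_mul_one_sub_sq]
    ring
  rw [hY, hS, show 2 * ℓ + 2 = 2 * (ℓ + 1) by ring, add_sub_cancel_left]
  refine (norm_deviation_sub_sub_le hm.le (ℓ + 1) (by push_cast; nlinarith)).trans ?_
  have hsq : ((ℓ : ℝ) + 1) ^ 2 ≤ 4 * ℓ ^ 2 := by nlinarith
  push_cast
  nlinarith [mul_le_mul_of_nonneg_right hsq (pow_nonneg ht 3)]

end Stability

/-- stability of `X_ℓ` and `Y_ℓ` around the fixed point `m_sc(z)`.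
`X_ℓ(Δ,z)` (resp. `Y_ℓ(Δ,z)`) is represented by the `(o,o)` entry of the Green's function
of the extension of any depth-`ℓ` truncated `d`-regular (resp. `(d-1)`-ary) tree. -/
theorem statement12 (d : ℕ) (hd : 3 ≤ d) :
    ∃ c₀ C : ℝ, 0 < c₀ ∧
      ∀ z : ℂ, 0 < z.im → ∀ ℓ : ℕ, 1 ≤ ℓ → ∀ Δ : ℂ,
        (ℓ : ℝ) * ‖Δ - mSC z‖ ≤ c₀ →
          (∀ (W : Type) [Fintype W] [DecidableEq W] (T : SimpleGraph W) (o : W),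
            IsTruncReg d ℓ T o →
              IsUnit (extMatrix d T (fun _ => 0) Δ z) ∧
                ‖extGreen d T (fun _ => 0) Δ z o o - mD d z -
                    (d : ℂ) / ((d : ℂ) - 1) * mD d z ^ 2 * mSC z ^ (2 * ℓ) * (Δ - mSC z)‖ ≤
                  C * (ℓ : ℝ) * ‖Δ - mSC z‖ ^ 2) ∧
          ∀ (W : Type) [Fintype W] [DecidableEq W] (T : SimpleGraph W) (o : W),
            IsTruncAry d ℓ T o →
              IsUnit (extMatrix d T (fun v => if v = o then 1 else 0) Δ z) ∧
                ‖extGreen d T (fun v => if v = o then 1 else 0) Δ z o o - mSC z -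
                    mSC z ^ (2 * ℓ + 2) * (Δ - mSC z) -
                    mSC z ^ (2 * ℓ + 3) * ((1 - mSC z ^ (2 * ℓ + 2)) / (1 - mSC z ^ 2)) *
                      (Δ - mSC z) ^ 2‖ ≤
                  C * (ℓ : ℝ) ^ 2 * ‖Δ - mSC z‖ ^ 3 := by
  refine ⟨1 / 8, 336, by norm_num, fun z hz ℓ hℓ Δ hΔ => ?_⟩
  obtain ⟨hroot, him⟩ := mSC_spec hz
  have hm := norm_lt_one_of_root hz him hroot
  refine ⟨fun W _ _ T o hT => hT.extGreen_root_estimate hd hℓ hroot hm hΔ, fun W _ _ T o hT => ?_⟩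
  obtain ⟨hunit, hY⟩ := hT.extGreen_root_estimate (by omega) hℓ hroot hm hΔ
  exact ⟨hunit, hY.trans (by gcongr; norm_num)⟩

end Paper
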